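/- Let λ and μ be skew shapes, i.e., finite convex subsets of the poset ℕ × ℕ ordered componentwise. Then there exists an injective map from pairs (U,T), where U is a semistandard tableau of shape μ and T is a semistandard tableau of shape λ, to pairs (U',T') where U' is a semistandard tableau of shape μ ∧ λ and T' is a semistandard tableau of shape μ ∨ λ, which is weight-preserving: for every n ∈ ℙ, the number of cells of U with entry n plus the number of cells of T with entry n equals the number of cells of U' with entry n plus the number of cells of T' with entry n. Consequently s_{μ∧λ} s_{μ∨λ} − s_μ s_λ is monomial-positive. -/
import Mathlib


variable {P : Type*} [PartialOrder P]

/-- `s < Q`: `s ∉ Q` and `s < t` for some `t ∈ Q`. -/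
def ltSet (s : P) (Q : Set P) : Prop := s ∉ Q ∧ ∃ t ∈ Q, s < t

/-- `s > Q`: `s ∉ Q` and `t < s` for some `t ∈ Q`. -/
def gtSet (s : P) (Q : Set P) : Prop := s ∉ Q ∧ ∃ t ∈ Q, t < s

/-- `s ∼ Q`: `s ∈ Q` or `s` is incomparable with every element of `Q`. -/
def simSet (s : P) (Q : Set P) : Prop := s ∈ Q ∨ ∀ t ∈ Q, ¬ s ≤ t ∧ ¬ t ≤ s

/-- A convex subset of a poset: closed under taking intervals. -/
def IsConvex (Q : Set P) : Prop := ∀ ⦃s r t : P⦄, s ∈ Q → t ∈ Q → s ≤ r → r ≤ t → r ∈ Q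

/-- `Q ∧ R = {s ∈ R | s < Q} ∪ {s ∈ Q | s ∼ R or s < R}`. -/
def wedgeSet (Q R : Set P) : Set P :=
  {s | s ∈ R ∧ ltSet s Q} ∪ {s | s ∈ Q ∧ (simSet s R ∨ ltSet s R)}

/-- `Q ∨ R = {s ∈ Q | s > R} ∪ {s ∈ R | s ∼ Q or s > Q}`. -/
def veeSet (Q R : Set P) : Set P :=
  {s | s ∈ Q ∧ gtSet s R} ∪ {s | s ∈ R ∧ (simSet s Q ∨ gtSet s Q)}

/-- A semistandard filling of a set `D` of cells `(i,j)` (row `i`, column `j`)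
with values in a linearly ordered type: weakly increasing along rows, strictly
increasing down columns. -/
def IsSSYT {α : Type*} [Preorder α] (D : Set (ℕ × ℕ)) (T : D → α) : Prop :=
  (∀ c c' : D, (c : ℕ × ℕ).1 = (c' : ℕ × ℕ).1 → (c : ℕ × ℕ).2 + 1 = (c' : ℕ × ℕ).2 →
      T c ≤ T c') ∧
    (∀ c c' : D, (c : ℕ × ℕ).1 + 1 = (c' : ℕ × ℕ).1 → (c : ℕ × ℕ).2 = (c' : ℕ × ℕ).2 →
      T c < T c')

/-- The weight `wt(T)(n) = #T⁻¹(n)` of a filling. -/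
noncomputable def wtFun {α β : Type*} (T : α → β) (n : β) : ℕ :=
  Nat.card {x : α // T x = n}

namespace CellTransferProof

attribute [local instance] Classical.propDecidable

abbrev Cl := ℕ × ℕ

lemma le_row (i j : ℕ) : ((i, j) : Cl) ≤ (i, j + 1) :=
  Prod.mk_le_mk.mpr ⟨le_rfl, Nat.le_succ j⟩
lemma le_col (i j : ℕ) : ((i, j) : Cl) ≤ (i + 1, j) :=
  Prod.mk_le_mk.mpr ⟨Nat.le_succ i, le_rfl⟩
lemma lt_row (i j : ℕ) : ((i, j) : Cl) < (i, j + 1) :=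
  lt_of_le_of_ne (le_row i j) (by simp)
lemma lt_col (i j : ℕ) : ((i, j) : Cl) < (i + 1, j) :=
  lt_of_le_of_ne (le_col i j) (by simp)

def RowCond (D : Set Cl) (f : Cl → ℕ+) : Prop :=
  ∀ i j, (i, j) ∈ D → (i, j + 1) ∈ D → f (i, j) ≤ f (i, j + 1)
def ColCond (D : Set Cl) (f : Cl → ℕ+) : Prop :=
  ∀ i j, (i, j) ∈ D → (i + 1, j) ∈ D → f (i, j) < f (i + 1, j)
def SSYT' (D : Set Cl) (f : Cl → ℕ+) : Prop := RowCond D f ∧ ColCond D f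

section Mem

variable {μ lam : Set Cl} {s c c' : Cl}

lemma I_mem_wedge (h1 : s ∈ μ) (h2 : s ∈ lam) : s ∈ wedgeSet μ lam :=
  Or.inr ⟨h1, Or.inl (Or.inl h2)⟩

lemma I_mem_vee (h1 : s ∈ μ) (h2 : s ∈ lam) : s ∈ veeSet μ lam :=
  Or.inr ⟨h2, Or.inl (Or.inl h1)⟩

lemma wedge_sub : wedgeSet μ lam ⊆ μ ∪ lam := by
  rintro s (⟨h, _⟩ | ⟨h, _⟩)
  · exact Or.inr h
  · exact Or.inl h

lemma vee_sub : veeSet μ lam ⊆ μ ∪ lam := by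
  rintro s (⟨h, _⟩ | ⟨h, _⟩)
  · exact Or.inl h
  · exact Or.inr h

lemma mu_cover (h : s ∈ μ) : s ∈ wedgeSet μ lam ∨ s ∈ veeSet μ lam := by
  by_cases hl : s ∈ lam
  · exact Or.inl (I_mem_wedge h hl)
  by_cases hsim : ∀ t ∈ lam, ¬ s ≤ t ∧ ¬ t ≤ s
  · exact Or.inl (Or.inr ⟨h, Or.inl (Or.inr hsim)⟩)
  push_neg at hsim
  obtain ⟨t, ht, hc⟩ := hsim
  have hne : s ≠ t := fun h' => hl (h' ▸ ht)
  by_cases hst : s ≤ t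
  · exact Or.inl (Or.inr ⟨h, Or.inr ⟨hl, t, ht, lt_of_le_of_ne hst hne⟩⟩)
  · exact Or.inr (Or.inl ⟨h, hl, t, ht, lt_of_le_of_ne (hc hst) hne.symm⟩)

lemma lam_cover (h : s ∈ lam) : s ∈ wedgeSet μ lam ∨ s ∈ veeSet μ lam := by
  by_cases hm : s ∈ μ
  · exact Or.inl (I_mem_wedge hm h)
  by_cases hsim : ∀ t ∈ μ, ¬ s ≤ t ∧ ¬ t ≤ s
  · exact Or.inr (Or.inr ⟨h, Or.inl (Or.inr hsim)⟩)
  push_neg at hsim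
  obtain ⟨t, ht, hc⟩ := hsim
  have hne : s ≠ t := fun h' => hm (h' ▸ ht)
  by_cases hst : s ≤ t
  · exact Or.inl (Or.inl ⟨h, hm, t, ht, lt_of_le_of_ne hst hne⟩)
  · exact Or.inr (Or.inr ⟨h, Or.inr ⟨hm, t, ht, lt_of_le_of_ne (hc hst) hne.symm⟩⟩)

/-- a cell of `μ` cannot lie weakly below a cell strictly below `μ`. -/
lemma above_lt (hμ : IsConvex μ) (hc : c ∈ μ) (hle : c ≤ c') (h : ltSet c' μ) : False := by
  obtain ⟨hn, t, ht, hlt⟩ := h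
  exact hn (hμ hc ht hle hlt.le)

lemma below_gt (hlam : IsConvex lam) (h : gtSet c lam) (hle : c ≤ c') (hc' : c' ∈ lam) :
    False := by
  obtain ⟨hn, t, ht, hlt⟩ := h
  exact hn (hlam ht hc' hlt.le hle)

/-- a wedge cell weakly above a cell of `lam` must be in `lam`. -/
lemma wedge_not_lam (hlam : IsConvex lam) (hc : c ∈ lam) (hle : c ≤ c')
    (hW : c' ∈ wedgeSet μ lam) (h2 : c' ∉ lam) : False := by
  rcases hW with ⟨h, _⟩ | ⟨_, hor⟩
  · exact h2 h
  rcases hor with hsim | hlt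
  · rcases hsim with h | h
    · exact h2 h
    · exact (h c hc).2 hle
  · obtain ⟨hn, t, ht, hlt⟩ := hlt
    exact h2 (hlam hc ht hle hlt.le)

/-- a vee cell weakly below a cell of `μ` must be in `μ`. -/
lemma vee_not_mu (hμ : IsConvex μ) (hc' : c' ∈ μ) (hle : c ≤ c')
    (hV : c ∈ veeSet μ lam) (h2 : c ∉ μ) : False := by
  rcases hV with ⟨h, _⟩ | ⟨_, hor⟩
  · exact h2 h
  rcases hor with hsim | hgt
  · rcases hsim with h | h
    · exact h2 h
    · exact (h c' hc').1 hle
  · obtain ⟨hn, t, ht, hlt⟩ := hgt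
    exact h2 (hμ ht hc' hlt.le hle)

lemma wedge_inter_vee (hμ : IsConvex μ) (hlam : IsConvex lam)
    (hW : s ∈ wedgeSet μ lam) (hV : s ∈ veeSet μ lam) : s ∈ μ ∧ s ∈ lam := by
  rcases hW with ⟨hsl, hlt⟩ | ⟨hsμ, hor⟩
  · rcases hV with ⟨hsμ, _⟩ | ⟨_, hor⟩
    · exact absurd hsμ hlt.1
    rcases hor with hsim | hgt
    · rcases hsim with h | h
      · exact absurd h hlt.1
      · obtain ⟨_, t, ht, hlt'⟩ := hlt
        exact absurd hlt'.le (h t ht).1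
    · obtain ⟨_, t', ht', hlt'⟩ := hgt
      obtain ⟨hn, t, ht, hl2⟩ := hlt
      exact absurd (hμ ht' ht hlt'.le hl2.le) hn
  · rcases hV with ⟨_, hgt⟩ | ⟨hsl, _⟩
    · rcases hor with hsim | hlt
      · rcases hsim with h | h
        · exact absurd h hgt.1
        · obtain ⟨_, t, ht, hlt'⟩ := hgt
          exact absurd hlt'.le (h t ht).2
      · obtain ⟨hn, t, ht, hl2⟩ := hlt
        obtain ⟨_, t', ht', hlt'⟩ := hgt
        exact absurd (hlam ht' ht hlt'.le hl2.le) hn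
    · exact ⟨hsμ, hsl⟩

end Mem


/-! ### The swap set -/

inductive Swap (μ lam : Set Cl) (u t : Cl → ℕ+) : Cl → Prop
  | f1r (i j : ℕ) (h1 : (i, j) ∈ lam) (h2 : (i, j) ∉ μ) (h3 : (i, j + 1) ∈ μ)
      (h4 : (i, j + 1) ∈ lam) (h5 : u (i, j + 1) < t (i, j)) : Swap μ lam u t (i, j + 1)
  | f1c (i j : ℕ) (h1 : (i, j) ∈ lam) (h2 : (i, j) ∉ μ) (h3 : (i + 1, j) ∈ μ)
      (h4 : (i + 1, j) ∈ lam) (h5 : u (i + 1, j) ≤ t (i, j)) : Swap μ lam u t (i + 1, j)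
  | f3r (i j : ℕ) (h1 : (i, j) ∈ μ) (h2 : (i, j) ∈ lam) (h3 : (i, j + 1) ∈ μ)
      (h4 : (i, j + 1) ∉ lam) (h5 : u (i, j + 1) < t (i, j)) : Swap μ lam u t (i, j)
  | f3c (i j : ℕ) (h1 : (i, j) ∈ μ) (h2 : (i, j) ∈ lam) (h3 : (i + 1, j) ∈ μ)
      (h4 : (i + 1, j) ∉ lam) (h5 : u (i + 1, j) ≤ t (i, j)) : Swap μ lam u t (i, j)
  | upr (i j : ℕ) (h0 : Swap μ lam u t (i, j)) (h1 : (i, j) ∈ μ) (h2 : (i, j) ∈ lam)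
      (h3 : (i, j + 1) ∈ μ) (h4 : (i, j + 1) ∈ lam) (h5 : u (i, j + 1) < t (i, j)) :
      Swap μ lam u t (i, j + 1)
  | upc (i j : ℕ) (h0 : Swap μ lam u t (i, j)) (h1 : (i, j) ∈ μ) (h2 : (i, j) ∈ lam)
      (h3 : (i + 1, j) ∈ μ) (h4 : (i + 1, j) ∈ lam) (h5 : u (i + 1, j) ≤ t (i, j)) :
      Swap μ lam u t (i + 1, j)
  | downr (i j : ℕ) (h0 : Swap μ lam u t (i, j + 1)) (h1 : (i, j) ∈ μ) (h2 : (i, j) ∈ lam)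
      (h3 : (i, j + 1) ∈ μ) (h4 : (i, j + 1) ∈ lam) (h5 : u (i, j + 1) < t (i, j)) :
      Swap μ lam u t (i, j)
  | downc (i j : ℕ) (h0 : Swap μ lam u t (i + 1, j)) (h1 : (i, j) ∈ μ) (h2 : (i, j) ∈ lam)
      (h3 : (i + 1, j) ∈ μ) (h4 : (i + 1, j) ∈ lam) (h5 : u (i + 1, j) ≤ t (i, j)) :
      Swap μ lam u t (i, j)

variable {μ lam : Set Cl} {u t : Cl → ℕ+} {s : Cl}

lemma swap_mem (h : Swap μ lam u t s) : s ∈ μ ∧ s ∈ lam := by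
  induction h with
  | f1r i j h1 h2 h3 h4 h5 => exact ⟨h3, h4⟩
  | f1c i j h1 h2 h3 h4 h5 => exact ⟨h3, h4⟩
  | f3r i j h1 h2 h3 h4 h5 => exact ⟨h1, h2⟩
  | f3c i j h1 h2 h3 h4 h5 => exact ⟨h1, h2⟩
  | upr i j h0 h1 h2 h3 h4 h5 ih => exact ⟨h3, h4⟩
  | upc i j h0 h1 h2 h3 h4 h5 ih => exact ⟨h3, h4⟩
  | downr i j h0 h1 h2 h3 h4 h5 ih => exact ⟨h1, h2⟩
  | downc i j h0 h1 h2 h3 h4 h5 ih => exact ⟨h1, h2⟩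

lemma swap_lt (hu : SSYT' μ u) (ht : SSYT' lam t) (h : Swap μ lam u t s) : u s < t s := by
  induction h with
  | f1r i j h1 h2 h3 h4 h5 => exact lt_of_lt_of_le h5 (ht.1 i j h1 h4)
  | f1c i j h1 h2 h3 h4 h5 => exact lt_of_le_of_lt h5 (ht.2 i j h1 h4)
  | f3r i j h1 h2 h3 h4 h5 => exact lt_of_le_of_lt (hu.1 i j h1 h3) h5
  | f3c i j h1 h2 h3 h4 h5 => exact lt_of_lt_of_le (hu.2 i j h1 h3) h5
  | upr i j h0 h1 h2 h3 h4 h5 ih => exact lt_of_lt_of_le h5 (ht.1 i j h2 h4)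
  | upc i j h0 h1 h2 h3 h4 h5 ih => exact lt_of_le_of_lt h5 (ht.2 i j h2 h4)
  | downr i j h0 h1 h2 h3 h4 h5 ih => exact lt_of_le_of_lt (hu.1 i j h1 h3) h5
  | downc i j h0 h1 h2 h3 h4 h5 ih => exact lt_of_lt_of_le (hu.2 i j h1 h3) h5

/-! ### The transferred fillings -/

noncomputable def wU (μ lam : Set Cl) (u t : Cl → ℕ+) : Cl → ℕ+ := fun s =>
  if Swap μ lam u t s then t s else if s ∈ μ then u s else t s

noncomputable def wT (μ lam : Set Cl) (u t : Cl → ℕ+) : Cl → ℕ+ := fun s =>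
  if Swap μ lam u t s then u s else if s ∈ lam then t s else u s

lemma wU_of_swap (h : Swap μ lam u t s) : wU μ lam u t s = t s := if_pos h

lemma wU_of_not_swap (hn : ¬ Swap μ lam u t s) (hm : s ∈ μ) : wU μ lam u t s = u s := by
  rw [wU, if_neg hn, if_pos hm]

lemma wU_of_not_mem (hm : s ∉ μ) : wU μ lam u t s = t s := by
  rw [wU, if_neg (fun hS => hm (swap_mem hS).1), if_neg hm]

lemma wT_of_swap (h : Swap μ lam u t s) : wT μ lam u t s = u s := if_pos h

lemma wT_of_not_swap (hn : ¬ Swap μ lam u t s) (hm : s ∈ lam) : wT μ lam u t s = t s := by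
  rw [wT, if_neg hn, if_pos hm]

lemma wT_of_not_mem (hm : s ∉ lam) : wT μ lam u t s = u s := by
  rw [wT, if_neg (fun hS => hm (swap_mem hS).2), if_neg hm]

/-! ### Semistandardness of the transferred fillings -/

theorem wU_row (hμ : IsConvex μ) (hlam : IsConvex lam) (hu : SSYT' μ u) (ht : SSYT' lam t) :
    RowCond (wedgeSet μ lam) (wU μ lam u t) := by
  intro i j hc hc'
  have hle := le_row i j
  have hc'W := hc'
  rcases hc with ⟨hcl, hclt⟩ | ⟨hcμ, _⟩
  · rw [wU_of_not_mem hclt.1]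
    rcases hc' with ⟨hc'l, hc'lt⟩ | ⟨hc'μ, _⟩
    · rw [wU_of_not_mem hc'lt.1]
      exact ht.1 i j hcl hc'l
    · by_cases hc'l : (i, j + 1) ∈ lam
      · by_cases hS : Swap μ lam u t (i, j + 1)
        · rw [wU_of_swap hS]; exact ht.1 i j hcl hc'l
        · rw [wU_of_not_swap hS hc'μ]
          by_contra hgt
          exact hS (Swap.f1r i j hcl hclt.1 hc'μ hc'l (not_le.mp hgt))
      · exact (wedge_not_lam hlam hcl hle hc'W hc'l).elim
  · by_cases hcl : (i, j) ∈ lam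
    · rcases hc' with ⟨hc'l, hc'lt⟩ | ⟨hc'μ, _⟩
      · exact (above_lt hμ hcμ hle hc'lt).elim
      · by_cases hc'l : (i, j + 1) ∈ lam
        · by_cases hS : Swap μ lam u t (i, j)
          · rw [wU_of_swap hS]
            by_cases hS' : Swap μ lam u t (i, j + 1)
            · rw [wU_of_swap hS']; exact ht.1 i j hcl hc'l
            · rw [wU_of_not_swap hS' hc'μ]
              by_contra hgt
              exact hS' (Swap.upr i j hS hcμ hcl hc'μ hc'l (not_le.mp hgt))
          · rw [wU_of_not_swap hS hcμ]
            by_cases hS' : Swap μ lam u t (i, j + 1)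
            · rw [wU_of_swap hS']
              exact le_trans (hu.1 i j hcμ hc'μ) (swap_lt hu ht hS').le
            · rw [wU_of_not_swap hS' hc'μ]; exact hu.1 i j hcμ hc'μ
        · exact (wedge_not_lam hlam hcl hle hc'W hc'l).elim
    · rw [wU_of_not_swap (fun hS => hcl (swap_mem hS).2) hcμ]
      rcases hc' with ⟨hc'l, hc'lt⟩ | ⟨hc'μ, _⟩
      · exact (above_lt hμ hcμ hle hc'lt).elim
      · by_cases hS' : Swap μ lam u t (i, j + 1)
        · rw [wU_of_swap hS']
          exact le_trans (hu.1 i j hcμ hc'μ) (swap_lt hu ht hS').le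
        · rw [wU_of_not_swap hS' hc'μ]; exact hu.1 i j hcμ hc'μ

theorem wU_col (hμ : IsConvex μ) (hlam : IsConvex lam) (hu : SSYT' μ u) (ht : SSYT' lam t) :
    ColCond (wedgeSet μ lam) (wU μ lam u t) := by
  intro i j hc hc'
  have hle := le_col i j
  have hc'W := hc'
  rcases hc with ⟨hcl, hclt⟩ | ⟨hcμ, _⟩
  · rw [wU_of_not_mem hclt.1]
    rcases hc' with ⟨hc'l, hc'lt⟩ | ⟨hc'μ, _⟩
    · rw [wU_of_not_mem hc'lt.1]
      exact ht.2 i j hcl hc'l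
    · by_cases hc'l : (i + 1, j) ∈ lam
      · by_cases hS : Swap μ lam u t (i + 1, j)
        · rw [wU_of_swap hS]; exact ht.2 i j hcl hc'l
        · rw [wU_of_not_swap hS hc'μ]
          by_contra hgt
          exact hS (Swap.f1c i j hcl hclt.1 hc'μ hc'l (not_lt.mp hgt))
      · exact (wedge_not_lam hlam hcl hle hc'W hc'l).elim
  · by_cases hcl : (i, j) ∈ lam
    · rcases hc' with ⟨hc'l, hc'lt⟩ | ⟨hc'μ, _⟩
      · exact (above_lt hμ hcμ hle hc'lt).elim
      · by_cases hc'l : (i + 1, j) ∈ lam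
        · by_cases hS : Swap μ lam u t (i, j)
          · rw [wU_of_swap hS]
            by_cases hS' : Swap μ lam u t (i + 1, j)
            · rw [wU_of_swap hS']; exact ht.2 i j hcl hc'l
            · rw [wU_of_not_swap hS' hc'μ]
              by_contra hgt
              exact hS' (Swap.upc i j hS hcμ hcl hc'μ hc'l (not_lt.mp hgt))
          · rw [wU_of_not_swap hS hcμ]
            by_cases hS' : Swap μ lam u t (i + 1, j)
            · rw [wU_of_swap hS']
              exact lt_trans (hu.2 i j hcμ hc'μ) (swap_lt hu ht hS')
            · rw [wU_of_not_swap hS' hc'μ]; exact hu.2 i j hcμ hc'μ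
        · exact (wedge_not_lam hlam hcl hle hc'W hc'l).elim
    · rw [wU_of_not_swap (fun hS => hcl (swap_mem hS).2) hcμ]
      rcases hc' with ⟨hc'l, hc'lt⟩ | ⟨hc'μ, _⟩
      · exact (above_lt hμ hcμ hle hc'lt).elim
      · by_cases hS' : Swap μ lam u t (i + 1, j)
        · rw [wU_of_swap hS']
          exact lt_trans (hu.2 i j hcμ hc'μ) (swap_lt hu ht hS')
        · rw [wU_of_not_swap hS' hc'μ]; exact hu.2 i j hcμ hc'μ

theorem wT_row (hμ : IsConvex μ) (hlam : IsConvex lam) (hu : SSYT' μ u) (ht : SSYT' lam t) :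
    RowCond (veeSet μ lam) (wT μ lam u t) := by
  intro i j hc hc'
  have hle := le_row i j
  have hcV := hc
  rcases hc with ⟨hcμ, hcgt⟩ | ⟨hcl, _⟩
  · rw [wT_of_not_mem hcgt.1]
    rcases hc' with ⟨hc'μ, hc'gt⟩ | ⟨hc'l, _⟩
    · rw [wT_of_not_mem hc'gt.1]; exact hu.1 i j hcμ hc'μ
    · exact (below_gt hlam hcgt hle hc'l).elim
  · by_cases hcμ : (i, j) ∈ μ
    · rcases hc' with ⟨hc'μ, hc'gt⟩ | ⟨hc'l, _⟩
      · rw [wT_of_not_mem hc'gt.1]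
        by_cases hS : Swap μ lam u t (i, j)
        · rw [wT_of_swap hS]; exact hu.1 i j hcμ hc'μ
        · rw [wT_of_not_swap hS hcl]
          by_contra hgt
          exact hS (Swap.f3r i j hcμ hcl hc'μ hc'gt.1 (not_le.mp hgt))
      · by_cases hc'μ : (i, j + 1) ∈ μ
        · by_cases hS : Swap μ lam u t (i, j)
          · rw [wT_of_swap hS]
            by_cases hS' : Swap μ lam u t (i, j + 1)
            · rw [wT_of_swap hS']; exact hu.1 i j hcμ hc'μ
            · rw [wT_of_not_swap hS' hc'l]
              exact le_trans (swap_lt hu ht hS).le (ht.1 i j hcl hc'l)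
          · rw [wT_of_not_swap hS hcl]
            by_cases hS' : Swap μ lam u t (i, j + 1)
            · rw [wT_of_swap hS']
              by_contra hgt
              exact hS (Swap.downr i j hS' hcμ hcl hc'μ hc'l (not_le.mp hgt))
            · rw [wT_of_not_swap hS' hc'l]; exact ht.1 i j hcl hc'l
        · rw [wT_of_not_swap (fun hS => hc'μ (swap_mem hS).1) hc'l]
          by_cases hS : Swap μ lam u t (i, j)
          · rw [wT_of_swap hS]
            exact le_trans (swap_lt hu ht hS).le (ht.1 i j hcl hc'l)
          · rw [wT_of_not_swap hS hcl]; exact ht.1 i j hcl hc'l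
    · rcases hc' with ⟨hc'μ, _⟩ | ⟨hc'l, _⟩
      · exact (vee_not_mu hμ hc'μ hle hcV hcμ).elim
      · by_cases hc'μ : (i, j + 1) ∈ μ
        · exact (vee_not_mu hμ hc'μ hle hcV hcμ).elim
        · rw [wT_of_not_swap (fun hS => hcμ (swap_mem hS).1) hcl,
            wT_of_not_swap (fun hS => hc'μ (swap_mem hS).1) hc'l]
          exact ht.1 i j hcl hc'l

theorem wT_col (hμ : IsConvex μ) (hlam : IsConvex lam) (hu : SSYT' μ u) (ht : SSYT' lam t) :
    ColCond (veeSet μ lam) (wT μ lam u t) := by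
  intro i j hc hc'
  have hle := le_col i j
  have hcV := hc
  rcases hc with ⟨hcμ, hcgt⟩ | ⟨hcl, _⟩
  · rw [wT_of_not_mem hcgt.1]
    rcases hc' with ⟨hc'μ, hc'gt⟩ | ⟨hc'l, _⟩
    · rw [wT_of_not_mem hc'gt.1]; exact hu.2 i j hcμ hc'μ
    · exact (below_gt hlam hcgt hle hc'l).elim
  · by_cases hcμ : (i, j) ∈ μ
    · rcases hc' with ⟨hc'μ, hc'gt⟩ | ⟨hc'l, _⟩
      · rw [wT_of_not_mem hc'gt.1]
        by_cases hS : Swap μ lam u t (i, j)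
        · rw [wT_of_swap hS]; exact hu.2 i j hcμ hc'μ
        · rw [wT_of_not_swap hS hcl]
          by_contra hgt
          exact hS (Swap.f3c i j hcμ hcl hc'μ hc'gt.1 (not_lt.mp hgt))
      · by_cases hc'μ : (i + 1, j) ∈ μ
        · by_cases hS : Swap μ lam u t (i, j)
          · rw [wT_of_swap hS]
            by_cases hS' : Swap μ lam u t (i + 1, j)
            · rw [wT_of_swap hS']; exact hu.2 i j hcμ hc'μ
            · rw [wT_of_not_swap hS' hc'l]
              exact lt_of_lt_of_le (swap_lt hu ht hS) (ht.2 i j hcl hc'l).le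
          · rw [wT_of_not_swap hS hcl]
            by_cases hS' : Swap μ lam u t (i + 1, j)
            · rw [wT_of_swap hS']
              by_contra hgt
              exact hS (Swap.downc i j hS' hcμ hcl hc'μ hc'l (not_lt.mp hgt))
            · rw [wT_of_not_swap hS' hc'l]; exact ht.2 i j hcl hc'l
        · rw [wT_of_not_swap (fun hS => hc'μ (swap_mem hS).1) hc'l]
          by_cases hS : Swap μ lam u t (i, j)
          · rw [wT_of_swap hS]
            exact lt_of_lt_of_le (swap_lt hu ht hS) (ht.2 i j hcl hc'l).le
          · rw [wT_of_not_swap hS hcl]; exact ht.2 i j hcl hc'l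
    · rcases hc' with ⟨hc'μ, _⟩ | ⟨hc'l, _⟩
      · exact (vee_not_mu hμ hc'μ hle hcV hcμ).elim
      · by_cases hc'μ : (i + 1, j) ∈ μ
        · exact (vee_not_mu hμ hc'μ hle hcV hcμ).elim
        · rw [wT_of_not_swap (fun hS => hcμ (swap_mem hS).1) hcl,
            wT_of_not_swap (fun hS => hc'μ (swap_mem hS).1) hc'l]
          exact ht.2 i j hcl hc'l

theorem wU_ssyt (hμ : IsConvex μ) (hlam : IsConvex lam) (hu : SSYT' μ u) (ht : SSYT' lam t) :
    SSYT' (wedgeSet μ lam) (wU μ lam u t) :=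
  ⟨wU_row hμ hlam hu ht, wU_col hμ hlam hu ht⟩

theorem wT_ssyt (hμ : IsConvex μ) (hlam : IsConvex lam) (hu : SSYT' μ u) (ht : SSYT' lam t) :
    SSYT' (veeSet μ lam) (wT μ lam u t) :=
  ⟨wT_row hμ hlam hu ht, wT_col hμ hlam hu ht⟩


/-! ### Injectivity -/

section Inj

variable {u₁ t₁ u₂ t₂ : Cl → ℕ+}

theorem swap_imp (hu₂ : SSYT' μ u₂) (ht₂ : SSYT' lam t₂)
    (hWeq : ∀ s ∈ wedgeSet μ lam, wU μ lam u₁ t₁ s = wU μ lam u₂ t₂ s)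
    (hVeq : ∀ s ∈ veeSet μ lam, wT μ lam u₁ t₁ s = wT μ lam u₂ t₂ s) :
    ∀ s, Swap μ lam u₁ t₁ s → Swap μ lam u₂ t₂ s := by
  intro s h
  induction h with
  | f1r i j h1 h2 h3 h4 h5 =>
    by_contra hn
    have ha : (i, j) ∈ wedgeSet μ lam := Or.inl ⟨h1, h2, (i, j + 1), h3, lt_row i j⟩
    have e1 : t₁ (i, j) = t₂ (i, j) := by
      have := hWeq _ ha; rwa [wU_of_not_mem h2, wU_of_not_mem h2] at this
    have hs1 : Swap μ lam u₁ t₁ (i, j + 1) := Swap.f1r i j h1 h2 h3 h4 h5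
    have e3 : u₁ (i, j + 1) = t₂ (i, j + 1) := by
      have := hVeq _ (I_mem_vee h3 h4)
      rwa [wT_of_swap hs1, wT_of_not_swap hn h4] at this
    have : t₂ (i, j + 1) < t₂ (i, j) := by rw [← e1, ← e3]; exact h5
    exact absurd (ht₂.1 i j h1 h4) (not_le.mpr this)
  | f1c i j h1 h2 h3 h4 h5 =>
    by_contra hn
    have ha : (i, j) ∈ wedgeSet μ lam := Or.inl ⟨h1, h2, (i + 1, j), h3, lt_col i j⟩
    have e1 : t₁ (i, j) = t₂ (i, j) := by
      have := hWeq _ ha; rwa [wU_of_not_mem h2, wU_of_not_mem h2] at this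
    have hs1 : Swap μ lam u₁ t₁ (i + 1, j) := Swap.f1c i j h1 h2 h3 h4 h5
    have e3 : u₁ (i + 1, j) = t₂ (i + 1, j) := by
      have := hVeq _ (I_mem_vee h3 h4)
      rwa [wT_of_swap hs1, wT_of_not_swap hn h4] at this
    have : t₂ (i + 1, j) ≤ t₂ (i, j) := by rw [← e1, ← e3]; exact h5
    exact absurd (ht₂.2 i j h1 h4) (not_lt.mpr this)
  | f3r i j h1 h2 h3 h4 h5 =>
    by_contra hn
    have hc' : (i, j + 1) ∈ veeSet μ lam := Or.inl ⟨h3, h4, (i, j), h2, lt_row i j⟩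
    have e1 : u₁ (i, j + 1) = u₂ (i, j + 1) := by
      have := hVeq _ hc'; rwa [wT_of_not_mem h4, wT_of_not_mem h4] at this
    have hs1 : Swap μ lam u₁ t₁ (i, j) := Swap.f3r i j h1 h2 h3 h4 h5
    have e2 : t₁ (i, j) = u₂ (i, j) := by
      have := hWeq _ (I_mem_wedge h1 h2)
      rwa [wU_of_swap hs1, wU_of_not_swap hn h1] at this
    have : u₂ (i, j + 1) < u₂ (i, j) := by rw [← e1, ← e2]; exact h5
    exact absurd (hu₂.1 i j h1 h3) (not_le.mpr this)
  | f3c i j h1 h2 h3 h4 h5 =>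
    by_contra hn
    have hc' : (i + 1, j) ∈ veeSet μ lam := Or.inl ⟨h3, h4, (i, j), h2, lt_col i j⟩
    have e1 : u₁ (i + 1, j) = u₂ (i + 1, j) := by
      have := hVeq _ hc'; rwa [wT_of_not_mem h4, wT_of_not_mem h4] at this
    have hs1 : Swap μ lam u₁ t₁ (i, j) := Swap.f3c i j h1 h2 h3 h4 h5
    have e2 : t₁ (i, j) = u₂ (i, j) := by
      have := hWeq _ (I_mem_wedge h1 h2)
      rwa [wU_of_swap hs1, wU_of_not_swap hn h1] at this
    have : u₂ (i + 1, j) ≤ u₂ (i, j) := by rw [← e1, ← e2]; exact h5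
    exact absurd (hu₂.2 i j h1 h3) (not_lt.mpr this)
  | upr i j h0 h1 h2 h3 h4 h5 ih =>
    by_contra hn
    have e1 : t₁ (i, j) = t₂ (i, j) := by
      have := hWeq _ (I_mem_wedge h1 h2)
      rwa [wU_of_swap h0, wU_of_swap ih] at this
    have hs1 : Swap μ lam u₁ t₁ (i, j + 1) := Swap.upr i j h0 h1 h2 h3 h4 h5
    have e3 : u₁ (i, j + 1) = t₂ (i, j + 1) := by
      have := hVeq _ (I_mem_vee h3 h4)
      rwa [wT_of_swap hs1, wT_of_not_swap hn h4] at this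
    have : t₂ (i, j + 1) < t₂ (i, j) := by rw [← e1, ← e3]; exact h5
    exact absurd (ht₂.1 i j h2 h4) (not_le.mpr this)
  | upc i j h0 h1 h2 h3 h4 h5 ih =>
    by_contra hn
    have e1 : t₁ (i, j) = t₂ (i, j) := by
      have := hWeq _ (I_mem_wedge h1 h2)
      rwa [wU_of_swap h0, wU_of_swap ih] at this
    have hs1 : Swap μ lam u₁ t₁ (i + 1, j) := Swap.upc i j h0 h1 h2 h3 h4 h5
    have e3 : u₁ (i + 1, j) = t₂ (i + 1, j) := by
      have := hVeq _ (I_mem_vee h3 h4)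
      rwa [wT_of_swap hs1, wT_of_not_swap hn h4] at this
    have : t₂ (i + 1, j) ≤ t₂ (i, j) := by rw [← e1, ← e3]; exact h5
    exact absurd (ht₂.2 i j h2 h4) (not_lt.mpr this)
  | downr i j h0 h1 h2 h3 h4 h5 ih =>
    by_contra hn
    have e1 : u₁ (i, j + 1) = u₂ (i, j + 1) := by
      have := hVeq _ (I_mem_vee h3 h4)
      rwa [wT_of_swap h0, wT_of_swap ih] at this
    have hs1 : Swap μ lam u₁ t₁ (i, j) := Swap.downr i j h0 h1 h2 h3 h4 h5
    have e2 : t₁ (i, j) = u₂ (i, j) := by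
      have := hWeq _ (I_mem_wedge h1 h2)
      rwa [wU_of_swap hs1, wU_of_not_swap hn h1] at this
    have : u₂ (i, j + 1) < u₂ (i, j) := by rw [← e1, ← e2]; exact h5
    exact absurd (hu₂.1 i j h1 h3) (not_le.mpr this)
  | downc i j h0 h1 h2 h3 h4 h5 ih =>
    by_contra hn
    have e1 : u₁ (i + 1, j) = u₂ (i + 1, j) := by
      have := hVeq _ (I_mem_vee h3 h4)
      rwa [wT_of_swap h0, wT_of_swap ih] at this
    have hs1 : Swap μ lam u₁ t₁ (i, j) := Swap.downc i j h0 h1 h2 h3 h4 h5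
    have e2 : t₁ (i, j) = u₂ (i, j) := by
      have := hWeq _ (I_mem_wedge h1 h2)
      rwa [wU_of_swap hs1, wU_of_not_swap hn h1] at this
    have : u₂ (i + 1, j) ≤ u₂ (i, j) := by rw [← e1, ← e2]; exact h5
    exact absurd (hu₂.2 i j h1 h3) (not_lt.mpr this)

theorem inj_vals (hswap : ∀ s, Swap μ lam u₁ t₁ s ↔ Swap μ lam u₂ t₂ s)
    (hWeq : ∀ s ∈ wedgeSet μ lam, wU μ lam u₁ t₁ s = wU μ lam u₂ t₂ s)
    (hVeq : ∀ s ∈ veeSet μ lam, wT μ lam u₁ t₁ s = wT μ lam u₂ t₂ s) :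
    (∀ s ∈ μ, u₁ s = u₂ s) ∧ (∀ s ∈ lam, t₁ s = t₂ s) := by
  constructor
  · intro s hs
    by_cases hl : s ∈ lam
    · by_cases hS : Swap μ lam u₁ t₁ s
      · have := hVeq _ (I_mem_vee hs hl)
        rwa [wT_of_swap hS, wT_of_swap ((hswap s).mp hS)] at this
      · have := hWeq _ (I_mem_wedge hs hl)
        rwa [wU_of_not_swap hS hs, wU_of_not_swap (fun h => hS ((hswap s).mpr h)) hs] at this
    · have hS : ¬ Swap μ lam u₁ t₁ s := fun h => hl (swap_mem h).2
      have hS2 : ¬ Swap μ lam u₂ t₂ s := fun h => hl (swap_mem h).2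
      rcases mu_cover (lam := lam) hs with hW | hV
      · have := hWeq _ hW
        rwa [wU_of_not_swap hS hs, wU_of_not_swap hS2 hs] at this
      · have := hVeq _ hV
        rwa [wT_of_not_mem hl, wT_of_not_mem hl] at this
  · intro s hs
    by_cases hm : s ∈ μ
    · by_cases hS : Swap μ lam u₁ t₁ s
      · have := hWeq _ (I_mem_wedge hm hs)
        rwa [wU_of_swap hS, wU_of_swap ((hswap s).mp hS)] at this
      · have := hVeq _ (I_mem_vee hm hs)
        rwa [wT_of_not_swap hS hs, wT_of_not_swap (fun h => hS ((hswap s).mpr h)) hs] at this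
    · rcases lam_cover (μ := μ) hs with hW | hV
      · have := hWeq _ hW
        rwa [wU_of_not_mem hm, wU_of_not_mem hm] at this
      · have := hVeq _ hV
        rwa [wT_of_not_swap (fun h => hm (swap_mem h).1) hs,
          wT_of_not_swap (fun h => hm (swap_mem h).1) hs] at this

end Inj


/-! ### Bridging between subtype fillings and total fillings -/

noncomputable def extFun (D : Set Cl) (f : D → ℕ+) : Cl → ℕ+ := fun s =>
  if h : s ∈ D then f ⟨s, h⟩ else 1

lemma extFun_eq {D : Set Cl} (f : D → ℕ+) (x : D) : extFun D f ↑x = f x := by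
  rw [extFun, dif_pos x.2]

lemma isSSYT_of {D : Set Cl} {g : Cl → ℕ+} (h : SSYT' D g) :
    IsSSYT D (fun x : D => g ↑x) := by
  constructor
  · rintro ⟨⟨i, j⟩, hc⟩ ⟨⟨i', j'⟩, hc'⟩ h1 h2
    simp only at h1 h2
    subst h1; subst h2
    exact h.1 i j hc hc'
  · rintro ⟨⟨i, j⟩, hc⟩ ⟨⟨i', j'⟩, hc'⟩ h1 h2
    simp only at h1 h2
    subst h1; subst h2
    exact h.2 i j hc hc'

lemma ssyt'_of {D : Set Cl} {f : D → ℕ+} (h : IsSSYT D f) : SSYT' D (extFun D f) := by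
  constructor
  · intro i j h1 h2
    have := h.1 ⟨(i, j), h1⟩ ⟨(i, j + 1), h2⟩ rfl rfl
    rwa [← extFun_eq f ⟨(i, j), h1⟩, ← extFun_eq f ⟨(i, j + 1), h2⟩] at this
  · intro i j h1 h2
    have := h.2 ⟨(i, j), h1⟩ ⟨(i + 1, j), h2⟩ rfl rfl
    rwa [← extFun_eq f ⟨(i, j), h1⟩, ← extFun_eq f ⟨(i + 1, j), h2⟩] at this

/-! ### The routing equivalence and weight preservation -/

section Route

variable (μ lam : Set Cl) (u t : Cl → ℕ+)

noncomputable def route : (μ ⊕ lam : Type) → (wedgeSet μ lam ⊕ veeSet μ lam : Type)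
  | .inl ⟨s, hs⟩ =>
      if hS : Swap μ lam u t s then .inr ⟨s, I_mem_vee hs (swap_mem hS).2⟩
      else if hW : s ∈ wedgeSet μ lam then .inl ⟨s, hW⟩
      else .inr ⟨s, (mu_cover hs).resolve_left hW⟩
  | .inr ⟨s, hs⟩ =>
      if hS : Swap μ lam u t s then .inl ⟨s, I_mem_wedge (swap_mem hS).1 hs⟩
      else if hV : s ∈ veeSet μ lam then .inr ⟨s, hV⟩
      else .inl ⟨s, (lam_cover hs).resolve_right hV⟩

noncomputable def routeInv : (wedgeSet μ lam ⊕ veeSet μ lam : Type) → (μ ⊕ lam : Type)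
  | .inl ⟨s, hs⟩ =>
      if hS : Swap μ lam u t s then .inr ⟨s, (swap_mem hS).2⟩
      else if hm : s ∈ μ then .inl ⟨s, hm⟩
      else .inr ⟨s, (wedge_sub hs).resolve_left hm⟩
  | .inr ⟨s, hs⟩ =>
      if hS : Swap μ lam u t s then .inl ⟨s, (swap_mem hS).1⟩
      else if hl : s ∈ lam then .inr ⟨s, hl⟩
      else .inl ⟨s, (vee_sub hs).resolve_right hl⟩

variable {μ lam u t}

lemma route_left_inv (hμ : IsConvex μ) (hlam : IsConvex lam) :
    Function.LeftInverse (routeInv μ lam u t) (route μ lam u t) := by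
  rintro (⟨s, hs⟩ | ⟨s, hs⟩)
  · by_cases hS : Swap μ lam u t s
    · simp only [route, dif_pos hS, routeInv]
    · simp only [route, dif_neg hS]
      by_cases hW : s ∈ wedgeSet μ lam
      · simp only [dif_pos hW, routeInv, dif_neg hS, dif_pos hs]
      · simp only [dif_neg hW, routeInv, dif_neg hS,
          dif_neg (fun hl => hW (I_mem_wedge hs hl))]
  · by_cases hS : Swap μ lam u t s
    · simp only [route, dif_pos hS, routeInv]
    · simp only [route, dif_neg hS]
      by_cases hV : s ∈ veeSet μ lam
      · simp only [dif_pos hV, routeInv, dif_neg hS, dif_pos hs]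
      · simp only [dif_neg hV, routeInv, dif_neg hS,
          dif_neg (fun hm => hV (I_mem_vee hm hs))]

lemma route_right_inv (hμ : IsConvex μ) (hlam : IsConvex lam) :
    Function.RightInverse (routeInv μ lam u t) (route μ lam u t) := by
  rintro (⟨s, hs⟩ | ⟨s, hs⟩)
  · by_cases hS : Swap μ lam u t s
    · simp only [routeInv, dif_pos hS, route]
    · simp only [routeInv, dif_neg hS]
      by_cases hm : s ∈ μ
      · simp only [dif_pos hm, route, dif_neg hS, dif_pos hs]
      · simp only [dif_neg hm, route, dif_neg hS,
          dif_neg (fun hV => hm (wedge_inter_vee hμ hlam hs hV).1)]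
  · by_cases hS : Swap μ lam u t s
    · simp only [routeInv, dif_pos hS, route]
    · simp only [routeInv, dif_neg hS]
      by_cases hl : s ∈ lam
      · simp only [dif_pos hl, route, dif_neg hS, dif_pos hs]
      · simp only [dif_neg hl, route, dif_neg hS,
          dif_neg (fun hW => hl (wedge_inter_vee hμ hlam hW hs).2)]

noncomputable def routeEquiv (hμ : IsConvex μ) (hlam : IsConvex lam) :
    (μ ⊕ lam : Type) ≃ (wedgeSet μ lam ⊕ veeSet μ lam : Type) :=
  ⟨route μ lam u t, routeInv μ lam u t, route_left_inv hμ hlam, route_right_inv hμ hlam⟩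

lemma route_val (z : (μ ⊕ lam : Type)) :
    Sum.elim (fun x : wedgeSet μ lam => wU μ lam u t ↑x)
      (fun y : veeSet μ lam => wT μ lam u t ↑y) (route μ lam u t z) =
    Sum.elim (fun x : μ => u ↑x) (fun y : lam => t ↑y) z := by
  rcases z with ⟨s, hs⟩ | ⟨s, hs⟩
  · by_cases hS : Swap μ lam u t s
    · simp only [route, dif_pos hS, Sum.elim_inr, Sum.elim_inl]
      exact wT_of_swap hS
    · simp only [route, dif_neg hS]
      by_cases hW : s ∈ wedgeSet μ lam
      · simp only [dif_pos hW, Sum.elim_inl]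
        exact wU_of_not_swap hS hs
      · simp only [dif_neg hW, Sum.elim_inr, Sum.elim_inl]
        exact wT_of_not_mem (fun hl => hW (I_mem_wedge hs hl))
  · by_cases hS : Swap μ lam u t s
    · simp only [route, dif_pos hS, Sum.elim_inl, Sum.elim_inr]
      exact wU_of_swap hS
    · simp only [route, dif_neg hS]
      by_cases hV : s ∈ veeSet μ lam
      · simp only [dif_pos hV, Sum.elim_inr]
        exact wT_of_not_swap hS hs
      · simp only [dif_neg hV, Sum.elim_inl, Sum.elim_inr]
        exact wU_of_not_mem (fun hm => hV (I_mem_vee hm hs))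

end Route

/-- splitting a subtype of a sum -/
def sumSubtype {α β : Type*} (p : α → Prop) (q : β → Prop) :
    {z : α ⊕ β // Sum.elim p q z} ≃ {x // p x} ⊕ {y // q y} where
  toFun := fun ⟨z, h⟩ =>
    match z, h with
    | .inl x, h => .inl ⟨x, h⟩
    | .inr y, h => .inr ⟨y, h⟩
  invFun := Sum.elim (fun x => ⟨.inl x.1, x.2⟩) (fun y => ⟨.inr y.1, y.2⟩)
  left_inv := by rintro ⟨(x | y), h⟩ <;> rfl
  right_inv := by rintro (⟨x, h⟩ | ⟨y, h⟩) <;> rfl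

theorem weight_eq {μ lam : Set Cl} {u t : Cl → ℕ+} (hμ : IsConvex μ) (hlam : IsConvex lam)
    (hμf : μ.Finite) (hlamf : lam.Finite) (n : ℕ+) :
    Nat.card {x : μ // u ↑x = n} + Nat.card {y : lam // t ↑y = n} =
      Nat.card {x : wedgeSet μ lam // wU μ lam u t ↑x = n} +
        Nat.card {y : veeSet μ lam // wT μ lam u t ↑y = n} := by
  have hWf : (wedgeSet μ lam).Finite := (hμf.union hlamf).subset wedge_sub
  have hVf : (veeSet μ lam).Finite := (hμf.union hlamf).subset vee_sub
  haveI := hμf.to_subtype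
  haveI := hlamf.to_subtype
  haveI := hWf.to_subtype
  haveI := hVf.to_subtype
  have e1 : {x : μ // u ↑x = n} ⊕ {y : lam // t ↑y = n} ≃
      {z : (μ ⊕ lam : Type) // Sum.elim (fun x : μ => u ↑x = n) (fun y : lam => t ↑y = n) z} :=
    (sumSubtype _ _).symm
  have e2 : {z : (μ ⊕ lam : Type) //
        Sum.elim (fun x : μ => u ↑x = n) (fun y : lam => t ↑y = n) z} ≃
      {z : (wedgeSet μ lam ⊕ veeSet μ lam : Type) //
        Sum.elim (fun x : wedgeSet μ lam => wU μ lam u t ↑x = n)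
          (fun y : veeSet μ lam => wT μ lam u t ↑y = n) z} := by
    refine Equiv.subtypeEquiv (routeEquiv (u := u) (t := t) hμ hlam) (fun z => ?_)
    have := route_val (u := u) (t := t) z
    rcases h : route μ lam u t z with x | y <;> rcases z with a | b <;>
      simp only [routeEquiv, Equiv.coe_fn_mk, h, Sum.elim_inl, Sum.elim_inr] at this ⊢ <;>
      rw [this]
  have e3 : {z : (wedgeSet μ lam ⊕ veeSet μ lam : Type) //
        Sum.elim (fun x : wedgeSet μ lam => wU μ lam u t ↑x = n)
          (fun y : veeSet μ lam => wT μ lam u t ↑y = n) z} ≃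
      {x : wedgeSet μ lam // wU μ lam u t ↑x = n} ⊕
        {y : veeSet μ lam // wT μ lam u t ↑y = n} := sumSubtype _ _
  calc Nat.card {x : μ // u ↑x = n} + Nat.card {y : lam // t ↑y = n}
      = Nat.card ({x : μ // u ↑x = n} ⊕ {y : lam // t ↑y = n}) := (Nat.card_sum).symm
    _ = Nat.card ({x : wedgeSet μ lam // wU μ lam u t ↑x = n} ⊕
          {y : veeSet μ lam // wT μ lam u t ↑y = n}) :=
        Nat.card_congr ((e1.trans e2).trans e3)
    _ = _ := Nat.card_sum


end CellTransferProof

open CellTransferProof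

/-- for skew shapes (finite convex subsets of `ℕ × ℕ`) `μ`, `λ`
there is a weight-preserving injection from pairs of semistandard tableaux of
shapes `(μ, λ)` to pairs of shapes `(μ ∧ λ, μ ∨ λ)`; consequently
`s_{μ∧λ} s_{μ∨λ} − s_μ s_λ` is monomial-positive. -/
theorem cellTransfer_skewShapes (μ lam : Set (ℕ × ℕ))
    (hμ : IsConvex μ) (hlam : IsConvex lam)
    (hμf : μ.Finite) (hlamf : lam.Finite) :
    (∃ F : {U : μ → ℕ+ // IsSSYT μ U} × {T : lam → ℕ+ // IsSSYT lam T} →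
        {U' : wedgeSet μ lam → ℕ+ // IsSSYT (wedgeSet μ lam) U'} ×
          {T' : veeSet μ lam → ℕ+ // IsSSYT (veeSet μ lam) T'},
      Function.Injective F ∧
        ∀ p, ∀ n : ℕ+, wtFun (p.1 : μ → ℕ+) n + wtFun (p.2 : lam → ℕ+) n =
          wtFun ((F p).1 : wedgeSet μ lam → ℕ+) n +
            wtFun ((F p).2 : veeSet μ lam → ℕ+) n) ∧
      ∀ d : ℕ+ → ℕ, (Function.support d).Finite →
        Nat.card {p : (μ → ℕ+) × (lam → ℕ+) //
            IsSSYT μ p.1 ∧ IsSSYT lam p.2 ∧ ∀ n, wtFun p.1 n + wtFun p.2 n = d n} ≤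
          Nat.card {p : (wedgeSet μ lam → ℕ+) × (veeSet μ lam → ℕ+) //
            IsSSYT (wedgeSet μ lam) p.1 ∧ IsSSYT (veeSet μ lam) p.2 ∧
              ∀ n, wtFun p.1 n + wtFun p.2 n = d n} := by
  classical
  have hpart1 : ∃ F : {U : μ → ℕ+ // IsSSYT μ U} × {T : lam → ℕ+ // IsSSYT lam T} →
      {U' : wedgeSet μ lam → ℕ+ // IsSSYT (wedgeSet μ lam) U'} ×
        {T' : veeSet μ lam → ℕ+ // IsSSYT (veeSet μ lam) T'},
      Function.Injective F ∧
        ∀ p, ∀ n : ℕ+, wtFun (p.1 : μ → ℕ+) n + wtFun (p.2 : lam → ℕ+) n =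
          wtFun ((F p).1 : wedgeSet μ lam → ℕ+) n +
            wtFun ((F p).2 : veeSet μ lam → ℕ+) n := by
    refine ⟨fun p =>
      (⟨fun x => wU μ lam (extFun μ p.1.1) (extFun lam p.2.1) ↑x,
        isSSYT_of (wU_ssyt hμ hlam (ssyt'_of p.1.2) (ssyt'_of p.2.2))⟩,
       ⟨fun y => wT μ lam (extFun μ p.1.1) (extFun lam p.2.1) ↑y,
        isSSYT_of (wT_ssyt hμ hlam (ssyt'_of p.1.2) (ssyt'_of p.2.2))⟩), ?_, ?_⟩
    · rintro ⟨⟨U1, hU1⟩, ⟨T1, hT1⟩⟩ ⟨⟨U2, hU2⟩, ⟨T2, hT2⟩⟩ h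
      simp only [Prod.mk.injEq, Subtype.mk.injEq] at h
      have hWeq : ∀ s ∈ wedgeSet μ lam,
          wU μ lam (extFun μ U1) (extFun lam T1) s = wU μ lam (extFun μ U2) (extFun lam T2) s :=
        fun s hs => congrFun h.1 ⟨s, hs⟩
      have hVeq : ∀ s ∈ veeSet μ lam,
          wT μ lam (extFun μ U1) (extFun lam T1) s = wT μ lam (extFun μ U2) (extFun lam T2) s :=
        fun s hs => congrFun h.2 ⟨s, hs⟩
      have h12 := swap_imp (ssyt'_of hU2) (ssyt'_of hT2) hWeq hVeq
      have h21 := swap_imp (ssyt'_of hU1) (ssyt'_of hT1)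
        (fun s hs => (hWeq s hs).symm) (fun s hs => (hVeq s hs).symm)
      have vals := inj_vals (fun s => ⟨h12 s, h21 s⟩) hWeq hVeq
      simp only [Prod.mk.injEq, Subtype.mk.injEq]
      constructor
      · funext x
        have := vals.1 ↑x x.2
        rwa [extFun_eq U1 x, extFun_eq U2 x] at this
      · funext y
        have := vals.2 ↑y y.2
        rwa [extFun_eq T1 y, extFun_eq T2 y] at this
    · rintro ⟨⟨U1, hU1⟩, ⟨T1, hT1⟩⟩ n
      show wtFun U1 n + wtFun T1 n = _
      unfold wtFun
      have h1 : Nat.card {x : μ // U1 x = n} =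
          Nat.card {x : μ // extFun μ U1 ↑x = n} :=
        Nat.card_congr (Equiv.subtypeEquivRight fun x => by rw [extFun_eq])
      have h2 : Nat.card {y : lam // T1 y = n} =
          Nat.card {y : lam // extFun lam T1 ↑y = n} :=
        Nat.card_congr (Equiv.subtypeEquivRight fun y => by rw [extFun_eq])
      rw [h1, h2]
      exact weight_eq hμ hlam hμf hlamf n
  refine ⟨hpart1, ?_⟩
  obtain ⟨F, hFinj, hFwt⟩ := hpart1
  intro d hd
  have hWf : (wedgeSet μ lam).Finite := (hμf.union hlamf).subset wedge_sub
  have hVf : (veeSet μ lam).Finite := (hμf.union hlamf).subset vee_sub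
  haveI := hWf.to_subtype
  haveI := hVf.to_subtype
  haveI : Finite ↥(Function.support d) := hd.to_subtype
  have key : ∀ (α : Type) (_ : Finite α) (f : α → ℕ+) (x : α), 0 < wtFun f (f x) := by
    intro α hα f x
    haveI : Nonempty {y : α // f y = f x} := ⟨⟨x, rfl⟩⟩
    exact Nat.card_pos
  haveI : Finite {p : (wedgeSet μ lam → ℕ+) × (veeSet μ lam → ℕ+) //
      IsSSYT (wedgeSet μ lam) p.1 ∧ IsSSYT (veeSet μ lam) p.2 ∧
        ∀ n, wtFun p.1 n + wtFun p.2 n = d n} := by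
    refine Finite.of_injective (fun p =>
      ((fun x : wedgeSet μ lam => (⟨p.1.1 x, by
          have hw := p.2.2.2 (p.1.1 x)
          have hp := key _ inferInstance p.1.1 x
          simp only [Function.mem_support]
          omega⟩ : ↥(Function.support d))),
       (fun y : veeSet μ lam => (⟨p.1.2 y, by
          have hw := p.2.2.2 (p.1.2 y)
          have hp := key _ inferInstance p.1.2 y
          simp only [Function.mem_support]
          omega⟩ : ↥(Function.support d))))) ?_
    intro a b h
    simp only [Prod.mk.injEq] at h
    apply Subtype.ext
    refine Prod.ext ?_ ?_
    · funext x; exact congrArg Subtype.val (congrFun h.1 x)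
    · funext y; exact congrArg Subtype.val (congrFun h.2 y)
  refine Nat.card_le_card_of_injective (fun p =>
    ⟨((F (⟨p.1.1, p.2.1⟩, ⟨p.1.2, p.2.2.1⟩)).1.1, (F (⟨p.1.1, p.2.1⟩, ⟨p.1.2, p.2.2.1⟩)).2.1),
      (F (⟨p.1.1, p.2.1⟩, ⟨p.1.2, p.2.2.1⟩)).1.2, (F (⟨p.1.1, p.2.1⟩, ⟨p.1.2, p.2.2.1⟩)).2.2,
      fun n => by
        rw [← hFwt (⟨p.1.1, p.2.1⟩, ⟨p.1.2, p.2.2.1⟩) n]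
        exact p.2.2.2 n⟩) ?_
  intro a b h
  have hv := congrArg Subtype.val h
  have hF : F (⟨a.1.1, a.2.1⟩, ⟨a.1.2, a.2.2.1⟩) = F (⟨b.1.1, b.2.1⟩, ⟨b.1.2, b.2.2.1⟩) :=
    Prod.ext (Subtype.ext (congrArg Prod.fst hv)) (Subtype.ext (congrArg Prod.snd hv))
  have h' := hFinj hF
  simp only [Prod.mk.injEq, Subtype.mk.injEq] at h'
  apply Subtype.ext
  exact Prod.ext h'.1 h'.2
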